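/- arXiv:2505.24053 — 2 statements merged into one kernel-verified Lean document; each statement's English description precedes it below -/
import Mathlib

section
/- Let Σ be a symmetric positive definite 3×3 matrix with Σ = R S Sᵀ Rᵀ where R is orthogonal and S = diag(s) with positive entries. Then the minimum over t ∈ ℝ of the Mahalanobis distance squared (o + t·d − μ)ᵀ Σ⁻¹ (o + t·d − μ), for d ≠ 0, equals ‖oᵤ × dᵤ‖²/‖dᵤ‖², where oᵤ = S⁻¹Rᵀ(o − μ) and dᵤ = S⁻¹Rᵀ d. -/
open Matrix

lemma lagrange3 (u v : Fin 3 → ℝ) :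
    (crossProduct u v) ⬝ᵥ (crossProduct u v) = (u ⬝ᵥ u) * (v ⬝ᵥ v) - (u ⬝ᵥ v)^2 := by
  simp [crossProduct, dotProduct, Fin.sum_univ_three]
  ring

/-- With `Σ = R S Sᵀ Rᵀ`, `R` orthogonal, `S = diag(s)` with positive
entries, the minimum over `t ∈ ℝ` of the squared Mahalanobis distance
`(o + t·d − μ)ᵀ Σ⁻¹ (o + t·d − μ)`, for `d ≠ 0`, equals `‖oᵤ × dᵤ‖²/‖dᵤ‖²` where
`oᵤ = S⁻¹Rᵀ(o − μ)` and `dᵤ = S⁻¹Rᵀ d`. -/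
theorem min_mahalanobis_sq_on_line
    (o d μ : Fin 3 → ℝ) (hd : d ≠ 0)
    (R : Matrix (Fin 3) (Fin 3) ℝ) (hR : R ∈ Matrix.orthogonalGroup (Fin 3) ℝ)
    (s : Fin 3 → ℝ) (hs : ∀ i, 0 < s i) :
    let S : Matrix (Fin 3) (Fin 3) ℝ := Matrix.diagonal s
    let Cov : Matrix (Fin 3) (Fin 3) ℝ := R * S * Sᵀ * Rᵀ
    let ou : Fin 3 → ℝ := (S⁻¹ * Rᵀ) *ᵥ (o - μ)
    let du : Fin 3 → ℝ := (S⁻¹ * Rᵀ) *ᵥ d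
    (⨅ t : ℝ, (o + t • d - μ) ⬝ᵥ (Cov⁻¹ *ᵥ (o + t • d - μ))) =
      (crossProduct ou du) ⬝ᵥ (crossProduct ou du) / (du ⬝ᵥ du) := by
  intro S Cov ou du
  have hRorth : Rᵀ * R = 1 := (Matrix.mem_orthogonalGroup_iff' (Fin 3) ℝ).mp hR
  have hRinv : R⁻¹ = Rᵀ := Matrix.inv_eq_left_inv hRorth
  have hRu : IsUnit R.det := Matrix.isUnit_det_of_left_inverse hRorth
  have hSdet : S.det ≠ 0 := by
    simp only [S, Matrix.det_diagonal]
    exact Finset.prod_ne_zero_iff.mpr fun i _ => (hs i).ne'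
  have hST : Sᵀ = S := Matrix.diagonal_transpose s
  have hRTinv : Rᵀ⁻¹ = R := by
    rw [← Matrix.transpose_nonsing_inv, hRinv, Matrix.transpose_transpose]
  have hCovinv : Cov⁻¹ = (S⁻¹ * Rᵀ)ᵀ * (S⁻¹ * Rᵀ) := by
    simp only [Cov, hST]
    rw [Matrix.mul_inv_rev, Matrix.mul_inv_rev, Matrix.mul_inv_rev]
    simp [hRTinv, hRinv, Matrix.transpose_mul, Matrix.transpose_nonsing_inv, hST,
      Matrix.mul_assoc]
  have hMdet : (S⁻¹ * Rᵀ).det ≠ 0 := by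
    rw [Matrix.det_mul, Matrix.det_nonsing_inv, Matrix.det_transpose]
    exact mul_ne_zero (by simp [Ring.inverse_eq_inv', inv_ne_zero hSdet]) hRu.ne_zero
  have hdu : du ≠ 0 := by
    intro h
    apply hd
    have := congrArg (fun v => (S⁻¹ * Rᵀ)⁻¹ *ᵥ v) h
    simpa [du, Matrix.mulVec_mulVec,
      Matrix.nonsing_inv_mul _ (isUnit_iff_ne_zero.mpr hMdet)] using this
  -- quadratic form rewrite
  have hform : ∀ t : ℝ, (o + t • d - μ) ⬝ᵥ (Cov⁻¹ *ᵥ (o + t • d - μ)) =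
      (ou + t • du) ⬝ᵥ (ou + t • du) := by
    intro t
    have hx : (S⁻¹ * Rᵀ) *ᵥ (o + t • d - μ) = ou + t • du := by
      have : o + t • d - μ = (o - μ) + t • d := by abel
      rw [this, Matrix.mulVec_add, Matrix.mulVec_smul]
    rw [hCovinv, ← Matrix.mulVec_mulVec, Matrix.dotProduct_mulVec,
      Matrix.vecMul_transpose, hx]
  set a : ℝ := du ⬝ᵥ du with ha
  set b : ℝ := ou ⬝ᵥ du with hb
  set c : ℝ := ou ⬝ᵥ ou with hc
  have hapos : 0 < a := by
    have h0 : 0 ≤ a := by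
      rw [ha, dotProduct]
      exact Finset.sum_nonneg fun i _ => mul_self_nonneg _
    rcases lt_or_eq_of_le h0 with h | h
    · exact h
    · exact absurd ((dotProduct_self_eq_zero).mp h.symm) hdu
  have hane : a ≠ 0 := hapos.ne'
  have hg : ∀ t : ℝ, (ou + t • du) ⬝ᵥ (ou + t • du) = a * (t + b / a) ^ 2 + (c - b ^ 2 / a) := by
    intro t
    have : (ou + t • du) ⬝ᵥ (ou + t • du) = c + 2 * b * t + a * t ^ 2 := by
      simp [dotProduct_add, add_dotProduct, smul_dotProduct,
        dotProduct_smul, dotProduct_comm du ou, ← ha, ← hb, ← hc]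
      ring
    rw [this]; field_simp; ring
  have hrhs : (crossProduct ou du) ⬝ᵥ (crossProduct ou du) / (du ⬝ᵥ du) = c - b ^ 2 / a := by
    rw [lagrange3, ← ha, ← hb, ← hc]
    field_simp
  rw [hrhs]
  apply le_antisymm
  · calc (⨅ t : ℝ, (o + t • d - μ) ⬝ᵥ (Cov⁻¹ *ᵥ (o + t • d - μ)))
        ≤ (o + (-(b / a)) • d - μ) ⬝ᵥ (Cov⁻¹ *ᵥ (o + (-(b / a)) • d - μ)) := by
          apply ciInf_le
          refine ⟨c - b ^ 2 / a, ?_⟩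
          rintro x ⟨t, rfl⟩
          dsimp only
          rw [hform, hg]
          nlinarith [sq_nonneg (t + b / a), hapos]
      _ = c - b ^ 2 / a := by rw [hform, hg]; simp
  · apply le_ciInf
    intro t
    rw [hform, hg]
    nlinarith [sq_nonneg (t + b / a), hapos]
end

section
/- Let Σ be a symmetric positive definite 3×3 matrix and μ ∈ ℝ³, and let the Gaussian density be G(x) = (1/(ρ·|Σ|^{1/2}))·exp(−(x−μ)ᵀΣ⁻¹(x−μ)/2). For any line x(t) = o + t·d with ‖d‖ = 1, the integral ∫_{ℝ} G(o + t·d) dt equals (√(2π)/(ρ·|Σ|^{1/2}))·(‖dᵤ‖)⁻¹·exp(−D²/2), where dᵤ = S⁻¹Rᵀd, oᵤ = S⁻¹Rᵀ(o−μ) for any decomposition Σ = RSSᵀRᵀ with R orthogonal and S = diag(s) positive, and D² = ‖oᵤ × dᵤ‖²/‖dᵤ‖². -/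
/-!
Writing `Σ = A Aᵀ` with `A = R S`, the exponent `(x - μ)ᵀ Σ⁻¹ (x - μ)` is `‖A⁻¹ (x - μ)‖²`, and
`A⁻¹ = S⁻¹ Rᵀ` because `R` is orthogonal. Along the line this is the quadratic
`‖oᵤ + t dᵤ‖²` in `t`; completing the square reduces the integral to a one-dimensional
Gaussian integral, and Lagrange's identity `‖oᵤ × dᵤ‖² = ‖oᵤ‖² ‖dᵤ‖² - (oᵤ ⬝ dᵤ)²` turns the
leftover constant into `D²`.
-/

open Matrix MeasureTheory Real

lemma integral_exp_neg_quadratic_div_two {a : ℝ} (ha : 0 < a) (b c : ℝ) :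
    ∫ t : ℝ, exp (-(a * t ^ 2 + 2 * b * t + c) / 2) =
      √(2 * π) / √a * exp (-(c - b ^ 2 / a) / 2) := by
  have hsq (t : ℝ) : exp (-(a * t ^ 2 + 2 * b * t + c) / 2) =
      exp (-(a / 2) * (t + b / a) ^ 2) * exp (-(c - b ^ 2 / a) / 2) := by
    rw [← exp_add]; congr 1; field_simp; ring
  simp_rw [hsq]
  rw [integral_mul_const, integral_add_right_eq_self (fun t => exp (-(a / 2) * t ^ 2)),
    integral_gaussian, show π / (a / 2) = 2 * π / a by field_simp, sqrt_div (by positivity)]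

lemma dotProduct_mulVec_inv_mul_transpose {n R : Type*} [Fintype n] [DecidableEq n] [CommRing R]
    (A : Matrix n n R) (x : n → R) :
    x ⬝ᵥ ((A * Aᵀ)⁻¹ *ᵥ x) = (A⁻¹ *ᵥ x) ⬝ᵥ (A⁻¹ *ᵥ x) := by
  rw [Matrix.mul_inv_rev, ← transpose_nonsing_inv, ← mulVec_mulVec, dotProduct_mulVec,
    vecMul_transpose]

lemma add_smul_dotProduct_add_smul {n R : Type*} [Fintype n] [CommRing R] (u v : n → R) (t : R) :
    (u + t • v) ⬝ᵥ (u + t • v) = (v ⬝ᵥ v) * t ^ 2 + 2 * (u ⬝ᵥ v) * t + u ⬝ᵥ u := by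
  simp only [add_dotProduct, dotProduct_add, smul_dotProduct, dotProduct_smul, smul_eq_mul,
    dotProduct_comm v u]
  ring

lemma integral_exp_neg_dotProduct_self_line {n : Type*} [Fintype n] (u : n → ℝ) {v : n → ℝ}
    (hv : v ≠ 0) :
    ∫ t : ℝ, exp (-((u + t • v) ⬝ᵥ (u + t • v)) / 2) =
      √(2 * π) / √(v ⬝ᵥ v) * exp (-(u ⬝ᵥ u - (u ⬝ᵥ v) ^ 2 / (v ⬝ᵥ v)) / 2) := by
  have hvv : 0 < v ⬝ᵥ v := (Finset.sum_nonneg fun i _ => mul_self_nonneg (v i)).lt_of_ne'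
    (dotProduct_self_eq_zero.not.mpr hv)
  simp_rw [add_smul_dotProduct_add_smul]
  exact integral_exp_neg_quadratic_div_two hvv _ _

lemma cross_dot_cross_self_div {u v : Fin 3 → ℝ} (hv : v ≠ 0) :
    (u ⨯₃ v) ⬝ᵥ (u ⨯₃ v) / (v ⬝ᵥ v) = u ⬝ᵥ u - (u ⬝ᵥ v) ^ 2 / (v ⬝ᵥ v) := by
  have hvv : v ⬝ᵥ v ≠ 0 := dotProduct_self_eq_zero.not.mpr hv
  rw [cross_dot_cross, dotProduct_comm v u]
  field_simp

theorem gaussian_line_integral_anisotropic_general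
    (o d μ : Fin 3 → ℝ) (hd : Real.sqrt (d ⬝ᵥ d) = 1)
    (ρ : ℝ)
    (R : Matrix (Fin 3) (Fin 3) ℝ) (hR : R ∈ Matrix.orthogonalGroup (Fin 3) ℝ)
    (s : Fin 3 → ℝ) (hs : ∀ i, 0 < s i) :
    let S : Matrix (Fin 3) (Fin 3) ℝ := Matrix.diagonal s
    let Cov : Matrix (Fin 3) (Fin 3) ℝ := R * S * Sᵀ * Rᵀ
    let ou : Fin 3 → ℝ := (S⁻¹ * Rᵀ) *ᵥ (o - μ)
    let du : Fin 3 → ℝ := (S⁻¹ * Rᵀ) *ᵥ d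
    let Dsq : ℝ := (crossProduct ou du) ⬝ᵥ (crossProduct ou du) / (du ⬝ᵥ du)
    (∫ t : ℝ, (1 / (ρ * Real.sqrt Cov.det)) *
        Real.exp (-((o + t • d - μ) ⬝ᵥ (Cov⁻¹ *ᵥ (o + t • d - μ))) / 2)) =
      (Real.sqrt (2 * π) / (ρ * Real.sqrt Cov.det)) * (Real.sqrt (du ⬝ᵥ du))⁻¹ *
        Real.exp (-Dsq / 2) := by
  intro S Cov ou du Dsq
  have hRinv : R⁻¹ = Rᵀ := inv_eq_left_inv ((mem_orthogonalGroup_iff' _ _).mp hR)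
  have hAinv : (R * S)⁻¹ = S⁻¹ * Rᵀ := by rw [Matrix.mul_inv_rev, hRinv]
  have hCov : Cov = R * S * (R * S)ᵀ := by simp only [Cov, transpose_mul, Matrix.mul_assoc]
  have hAinv_unit : IsUnit (S⁻¹ * Rᵀ) := by
    rw [← hAinv, isUnit_nonsing_inv_iff]
    exact (Unitary.isUnit_coe (U := ⟨R, hR⟩)).mul
      (isUnit_diagonal.mpr (Pi.isUnit_iff.mpr fun i => (hs i).ne'.isUnit))
  have hdu : du ≠ 0 := by
    have hd0 : d ≠ 0 := by rintro rfl; simp at hd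
    simpa only [mulVec_zero] using (mulVec_injective_of_isUnit hAinv_unit).ne hd0
  have hline (t : ℝ) : (o + t • d - μ) ⬝ᵥ (Cov⁻¹ *ᵥ (o + t • d - μ)) =
      (ou + t • du) ⬝ᵥ (ou + t • du) := by
    rw [hCov, dotProduct_mulVec_inv_mul_transpose, hAinv, add_sub_right_comm, mulVec_add,
      mulVec_smul]
  simp_rw [hline]
  rw [integral_const_mul, integral_exp_neg_dotProduct_self_line ou hdu,
    ← cross_dot_cross_self_div hdu]
  ring

/-- For the anisotropic Gaussian
`G(x) = (1/(ρ·|Σ|^{1/2}))·exp(−(x−μ)ᵀΣ⁻¹(x−μ)/2)` and any line `x(t) = o + t·d` with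
`‖d‖ = 1`, the integral `∫_ℝ G(o + t·d) dt` equals
`(√(2π)/(ρ·|Σ|^{1/2}))·‖dᵤ‖⁻¹·exp(−D²/2)`, where `dᵤ = S⁻¹Rᵀd`, `oᵤ = S⁻¹Rᵀ(o−μ)`
for a decomposition `Σ = RSSᵀRᵀ` (`R` orthogonal, `S = diag(s)` positive), and
`D² = ‖oᵤ × dᵤ‖²/‖dᵤ‖²`. -/
theorem gaussian_line_integral_anisotropic
    (o d μ : Fin 3 → ℝ) (hd : Real.sqrt (d ⬝ᵥ d) = 1)
    (ρ : ℝ) (hρ : 0 < ρ)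
    (R : Matrix (Fin 3) (Fin 3) ℝ) (hR : R ∈ Matrix.orthogonalGroup (Fin 3) ℝ)
    (s : Fin 3 → ℝ) (hs : ∀ i, 0 < s i) :
    let S : Matrix (Fin 3) (Fin 3) ℝ := Matrix.diagonal s
    let Cov : Matrix (Fin 3) (Fin 3) ℝ := R * S * Sᵀ * Rᵀ
    let ou : Fin 3 → ℝ := (S⁻¹ * Rᵀ) *ᵥ (o - μ)
    let du : Fin 3 → ℝ := (S⁻¹ * Rᵀ) *ᵥ d
    let Dsq : ℝ := (crossProduct ou du) ⬝ᵥ (crossProduct ou du) / (du ⬝ᵥ du)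
    (∫ t : ℝ, (1 / (ρ * Real.sqrt Cov.det)) *
        Real.exp (-((o + t • d - μ) ⬝ᵥ (Cov⁻¹ *ᵥ (o + t • d - μ))) / 2)) =
      (Real.sqrt (2 * π) / (ρ * Real.sqrt Cov.det)) * (Real.sqrt (du ⬝ᵥ du))⁻¹ *
        Real.exp (-Dsq / 2) :=
  gaussian_line_integral_anisotropic_general o d μ hd ρ R hR s hs
end
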